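/- Let m be a positive integer, n an integer with 0 ≤ n < 2m, and a, b ∈ ℤ. Let τ lie in the upper half-plane and z ∈ ℂ. Then F^{[m](a,b)}_{n,m}(−1/τ, z/τ) = ((−iτ)^{1/2}/√(2m)) e^{πinb/m} e^{πiaz/τ} e^{−πia²/(2mτ)} e^{πim(z−a/m)²/(2τ)} g^{[m]}_{n,m}(−1/τ) ∑_{k=0}^{2m−1} e^{−πi(n+a)k/m} θ_{k,m}(τ, z), where (−iτ)^{1/2} denotes the principal branch. -/

import Mathlib

noncomputable section

open Complex

/-- `e2 w = exp (2 π i w)`; with `q = e^{2πiτ}`, the power `q^x` corresponds to `e2 (x * τ)`. -/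
def e2 (w : ℂ) : ℂ := Complex.exp (2 * (Real.pi : ℂ) * Complex.I * w)

/-- Jacobi-type theta function `θ^{(ε)}_{n,m}(τ, z) = ∑_{j∈ℤ} ε^j q^{m(j+n/(2m))²} e^{2πim(j+n/(2m))z}`. -/
def jtheta (ε n m τ z : ℂ) : ℂ :=
  ∑' j : ℤ, ε ^ j *
    e2 (m * ((j : ℂ) + n / (2 * m)) ^ 2 * τ + m * ((j : ℂ) + n / (2 * m)) * z)

/-- Mock theta function `Φ₁^{(ε)[m,s]}(τ, z₁, z₂)`. -/
def Phi1 (ε m s τ z₁ z₂ : ℂ) : ℂ :=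
  ∑' j : ℤ, ε ^ j *
    e2 (m * (j : ℂ) * (z₁ + z₂) + s * z₁ + (m * (j : ℂ) ^ 2 + s * (j : ℂ)) * τ) /
      (1 - e2 (z₁ + (j : ℂ) * τ))

/-- Dedekind eta function `η(τ) = q^{1/24} ∏_{k≥1} (1 - q^k)`. -/
def dedekindEta (τ : ℂ) : ℂ := e2 (τ / 24) * ∏' k : ℕ, (1 - e2 (((k : ℂ) + 1) * τ))

/-- Jacobi theta `ϑ₁₁(τ, z) = i ∑_{j∈ℤ} (−1)^j q^{(j+1/2)²/2} e^{2πi(j+1/2)z}`. -/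
def theta11 (τ z : ℂ) : ℂ :=
  Complex.I * ∑' j : ℤ, (-1 : ℂ) ^ j *
    e2 (((j : ℂ) + 1 / 2) ^ 2 / 2 * τ + ((j : ℂ) + 1 / 2) * z)

/-- Indefinite double sum `(∑_{j,p∈ℤ, 0<p≤j} − ∑_{j,p∈ℤ, j<p≤0}) f j p`. -/
def indefSum (f : ℤ → ℤ → ℂ) : ℂ :=
  ∑' jp : ℤ × ℤ,
    ((if 0 < jp.2 ∧ jp.2 ≤ jp.1 then f jp.1 jp.2 else 0) -
      (if jp.1 < jp.2 ∧ jp.2 ≤ 0 then f jp.1 jp.2 else 0))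

/-- `g^{[m]}_{n,ν}(τ)`. -/
def gfun (m : ℂ) (n ν : ℤ) (τ : ℂ) : ℂ :=
  indefSum fun j p =>
    (-1 : ℂ) ^ j *
      e2 (((m + 1 / 2) * ((j : ℂ) + (ν : ℂ) - ((ν : ℂ) + 1 / 2) / (2 * m + 1)) ^ 2 -
        m * ((p : ℂ) + (ν : ℂ) - (n : ℂ) / (2 * m)) ^ 2) * τ)

/-- `h^{[m]}_{n,ν}(τ, z)`. -/
def hfun (m : ℂ) (n ν : ℤ) (τ z : ℂ) : ℂ :=
  ∑' j : ℤ,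
    e2 (m * (j : ℂ) * z + (n : ℂ) * z / 2 +
        (m * (j : ℂ) ^ 2 + (n : ℂ) * ((j : ℂ) + (ν : ℂ))) * τ) /
      (1 - e2 (m * z + 2 * m * ((j : ℂ) + (ν : ℂ)) * τ))

/-- `G^{[m]}_{n,ν}(τ, z)`. -/
def Gfun (m : ℂ) (n ν : ℤ) (τ z : ℂ) : ℂ :=
  gfun m n ν τ * jtheta 1 (n : ℂ) m τ z +
    (-1 : ℂ) ^ ν * e2 (-(m * (ν : ℂ) ^ 2) * τ) *
      jtheta (-1) ((ν : ℂ) + 1 / 2) (m + 1 / 2) τ 0 * hfun m n ν τ z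

/-- `F^{[m](a,b)}_{n,ν}(τ, z)`. -/
def Ffun (m : ℂ) (a b n ν : ℤ) (τ z : ℂ) : ℂ :=
  e2 ((a : ℂ) * z / 2 + (a : ℂ) ^ 2 / (4 * m) * τ) *
    Gfun m n ν τ (z + (a : ℂ) * τ / m + (b : ℂ) / m)

/-- The coefficient `f_{j,k}` of Lemma 3.1:
`f_{j,k} = (−1)^j q^{(m+1/2)(j+s/(2m+1))² − k²/(4m)} e^{−2πijm(z₁−z₂)+πik(z₁−z₂)}`. -/
def fcoef (m s τ z₁ z₂ : ℂ) (j k : ℤ) : ℂ :=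
  (-1 : ℂ) ^ j *
    e2 (((m + 1 / 2) * ((j : ℂ) + s / (2 * m + 1)) ^ 2 - (k : ℂ) ^ 2 / (4 * m)) * τ +
      (-((j : ℂ) * m) + (k : ℂ) / 2) * (z₁ - z₂))

/-- `F^{[m](a,b)}_{n,m}(τ, z) = e^{πiaz} q^{a²/(4m)} g^{[m]}_{n,m}(τ) θ_{n,m}(τ, z+aτ/m+b/m)`,
the specialization of `F^{[m](a,b)}_{n,ν}` at `ν = m` (where `θ^{(−)}_{m+1/2,m+1/2}(τ,0) = 0`). -/
def Fspecial (m : ℕ) (a b n : ℤ) (τ z : ℂ) : ℂ :=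
  e2 ((a : ℂ) * z / 2 + (a : ℂ) ^ 2 / (4 * (m : ℂ)) * τ) * gfun (m : ℂ) n (m : ℤ) τ *
    jtheta 1 (n : ℂ) (m : ℂ) τ (z + (a : ℂ) * τ / (m : ℂ) + (b : ℂ) / (m : ℂ))

/-!
In terms of Mathlib's `ϑ(w, t) = ∑ₗ exp(πi l² t + 2πi l w)` one has
`θ_{n,m}(τ, z) = e^{…} ϑ(nτ + mz, 2mτ)`, while splitting the series of `ϑ(z/2 - c/(2m), τ/(2m))`
by the residue of `l` mod `2m` gives the twisted sum `∑_k e^{-πick/m} θ_{k,m}(τ, z)`. Jacobi's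
functional equation for `ϑ` at `t = τ/(2m)` is therefore the `S`-transformation of `θ_{n,m}`.
The characteristics `a, b` of `F` only shift the elliptic variable by `(aτ + b)/m`: the shift by
`b/m` multiplies `θ_{n,m}` by `e^{πinb/m}`, and after the transformation the shift by `-a/m`
twists each `θ_{k,m}` by `e^{-πiak/m}`.
-/

open Finset
open scoped Real

lemma e2_add (v w : ℂ) : e2 (v + w) = e2 v * e2 w := by
  rw [e2, e2, e2, mul_add, Complex.exp_add]

lemma e2_intCast (k : ℤ) : e2 k = 1 := by
  rw [e2, mul_comm, exp_int_mul_two_pi_mul_I]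

lemma e2_eq_of_eq_add_intCast {v w : ℂ} (k : ℤ) (h : v = w + k) : e2 v = e2 w := by
  rw [h, e2_add, e2_intCast, mul_one]

lemma jacobiTheta₂_term_eq_e2 (l : ℤ) (w t : ℂ) :
    jacobiTheta₂_term l w t = e2 (l * w + l ^ 2 * t / 2) := by
  rw [jacobiTheta₂_term, e2]
  congr 1
  ring

lemma jacobiTheta₂_div_neg_one_div (ξ : ℂ) {t : ℂ} (ht : t ≠ 0) :
    jacobiTheta₂ (ξ / t) (-1 / t) =
      (-I * t) ^ (1 / 2 : ℂ) * cexp (π * I * ξ ^ 2 / t) * jacobiTheta₂ ξ t := by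
  have hroot : (-I * t) ^ (1 / 2 : ℂ) ≠ 0 := by
    simp [Complex.cpow_eq_zero_iff, I_ne_zero, ht]
  have hexp : cexp (π * I * ξ ^ 2 / t) * cexp (-π * I * ξ ^ 2 / t) = 1 := by
    rw [← Complex.exp_add, ← Complex.exp_zero]
    congr 1
    ring
  rw [jacobiTheta₂_functional_equation ξ t]
  linear_combination (-jacobiTheta₂ (ξ / t) (-1 / t)) * hexp -
    cexp (π * I * ξ ^ 2 / t) * cexp (-π * I * ξ ^ 2 / t) * jacobiTheta₂ (ξ / t) (-1 / t) *
      mul_one_div_cancel hroot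

lemma mul_ofReal_cpow {w : ℂ} (hw : w ≠ 0) {r : ℝ} (hr : 0 < r) (s : ℂ) :
    (w * r) ^ s = w ^ s * (r : ℂ) ^ s := by
  have hr' : (r : ℂ) ≠ 0 := ofReal_ne_zero.2 hr.ne'
  rw [cpow_def_of_ne_zero (mul_ne_zero hw hr'), cpow_def_of_ne_zero hw, cpow_def_of_ne_zero hr',
    mul_comm w, log_ofReal_mul hr hw, ← Complex.ofReal_log hr.le, add_mul, Complex.exp_add,
    mul_comm]

lemma tsum_int_eq_sum_range_tsum {E : Type*} [NormedAddCommGroup E] [CompleteSpace E]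
    (N : ℕ) [NeZero N] {f : ℤ → E} (hf : Summable f) :
    ∑' l, f l = ∑ k ∈ range N, ∑' j : ℤ, f (j * N + k) := by
  let e : Fin N × ℤ ≃ ℤ := (Equiv.prodComm _ _).trans (Int.divModEquiv N).symm
  have hs : Summable fun p => f (e p) := e.summable_iff.2 hf
  rw [← e.tsum_eq, hs.tsum_prod, tsum_fintype,
    ← Fin.sum_univ_eq_sum_range (fun k => ∑' j : ℤ, f (j * N + k))]
  rfl

lemma jtheta_one_eq_jacobiTheta₂ {m : ℂ} (hm : m ≠ 0) (n τ z : ℂ) :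
    jtheta 1 n m τ z = e2 (n ^ 2 / (4 * m) * τ + n * z / 2) *
      jacobiTheta₂ (n * τ + m * z) (2 * m * τ) := by
  rw [jtheta, jacobiTheta₂, ← tsum_mul_left]
  refine tsum_congr fun j => ?_
  rw [one_zpow, one_mul, jacobiTheta₂_term_eq_e2, ← e2_add]
  congr 1
  field_simp
  ring

lemma jtheta_one_add_intCast_div {m : ℂ} (hm : m ≠ 0) (n τ z : ℂ) (b : ℤ) :
    jtheta 1 n m τ (z + b / m) = e2 (n * b / (2 * m)) * jtheta 1 n m τ z := by
  rw [jtheta, jtheta, ← tsum_mul_left]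
  refine tsum_congr fun j => ?_
  rw [one_zpow, one_mul, one_mul, ← e2_add]
  exact e2_eq_of_eq_add_intCast (j * b) (by push_cast; field_simp; ring)

lemma sum_range_e2_mul_jtheta {m : ℕ} (hm : m ≠ 0) (c : ℤ) {τ : ℂ} (hτ : 0 < τ.im) (z : ℂ) :
    ∑ k ∈ range (2 * m), e2 (-(c * k) / (2 * m)) * jtheta 1 k m τ z =
      jacobiTheta₂ (z / 2 - c / (2 * m)) (τ / (2 * m)) := by
  have : NeZero (2 * m) := ⟨by omega⟩
  have hm' : (m : ℂ) ≠ 0 := Nat.cast_ne_zero.2 hm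
  have ht : 0 < (τ / (2 * m)).im := by
    rw [show (2 * m : ℂ) = ((2 * m : ℕ) : ℂ) by push_cast; rfl, div_natCast_im]
    positivity
  rw [jacobiTheta₂, tsum_int_eq_sum_range_tsum (2 * m) ((summable_jacobiTheta₂_term_iff _ _).2 ht)]
  refine sum_congr rfl fun k _ => ?_
  rw [jtheta, ← tsum_mul_left]
  refine tsum_congr fun j => ?_
  rw [one_zpow, one_mul, jacobiTheta₂_term_eq_e2, ← e2_add]
  exact e2_eq_of_eq_add_intCast (j * c) (by push_cast; field_simp; ring)

lemma jtheta_one_neg_one_div {m : ℕ} (hm : m ≠ 0) (n : ℤ) {τ : ℂ} (hτ : 0 < τ.im) (z : ℂ) :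
    jtheta 1 n m (-1 / τ) (z / τ) =
      (-(I * τ)) ^ (1 / 2 : ℂ) / (√(2 * m : ℝ) : ℂ) * e2 (m * z ^ 2 / (4 * τ)) *
        ∑ k ∈ range (2 * m), e2 (-(n * k) / (2 * m)) * jtheta 1 k m τ z := by
  have hm' : (m : ℂ) ≠ 0 := Nat.cast_ne_zero.2 hm
  have hτ0 : τ ≠ 0 := fun h => by simp [h] at hτ
  have h2m : (0 : ℝ) < 2 * m := by positivity
  set t := τ / (2 * m)
  set ξ := z / 2 - n / (2 * m)
  have ht : t ≠ 0 := by simp [t, hτ0, hm']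
  have hroot : (-I * t) ^ (1 / 2 : ℂ) = (-(I * τ)) ^ (1 / 2 : ℂ) / (√(2 * m : ℝ) : ℂ) := by
    have hsplit : -I * t = -(I * τ) * (((2 * m : ℝ)⁻¹ : ℝ) : ℂ) := by
      simp only [t]; push_cast; ring
    rw [hsplit, mul_ofReal_cpow (by simp [hτ0]) (inv_pos.2 h2m),
      div_eq_mul_inv ((-(I * τ)) ^ (1 / 2 : ℂ)), Real.sqrt_eq_rpow, ← ofReal_inv,
      ← Real.inv_rpow h2m.le, Complex.ofReal_cpow (inv_nonneg.2 h2m.le)]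
    push_cast
    rfl
  have hexp : e2 (n ^ 2 / (4 * m) * (-1 / τ) + n * (z / τ) / 2) * cexp (π * I * ξ ^ 2 / t) =
      e2 (m * z ^ 2 / (4 * τ)) := by
    rw [e2, e2, ← Complex.exp_add]
    congr 1
    simp only [t, ξ]
    field_simp
    ring
  rw [jtheta_one_eq_jacobiTheta₂ hm', sum_range_e2_mul_jtheta hm n hτ z,
    show (n : ℂ) * (-1 / τ) + m * (z / τ) = ξ / t by simp only [t, ξ]; field_simp; ring,
    show 2 * (m : ℂ) * (-1 / τ) = -1 / t by simp only [t]; field_simp,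
    jacobiTheta₂_div_neg_one_div ξ ht, hroot]
  linear_combination (-(I * τ)) ^ (1 / 2 : ℂ) / (√(2 * m : ℝ) : ℂ) * jacobiTheta₂ ξ t * hexp

theorem stmt_18_general (m : ℕ) (hm : 0 < m) (n : ℤ) (a b : ℤ)
    (τ : ℂ) (hτ : 0 < τ.im) (z : ℂ) :
    Fspecial m a b n (-1 / τ) (z / τ) =
      (-(Complex.I * τ)) ^ ((1 : ℂ) / 2) / (Real.sqrt (2 * (m : ℝ)) : ℂ) *
        e2 ((n : ℂ) * (b : ℂ) / (2 * (m : ℂ))) * e2 ((a : ℂ) * z / (2 * τ)) *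
        e2 (-((a : ℂ) ^ 2) / (4 * (m : ℂ) * τ)) *
        e2 ((m : ℂ) * (z - (a : ℂ) / (m : ℂ)) ^ 2 / (4 * τ)) *
        gfun (m : ℂ) n (m : ℤ) (-1 / τ) *
        ∑ k ∈ Finset.range (2 * m),
          e2 (-(((n : ℂ) + (a : ℂ)) * (k : ℂ)) / (2 * (m : ℂ))) *
            jtheta 1 (k : ℂ) (m : ℂ) τ z := by
  have hm' : (m : ℂ) ≠ 0 := Nat.cast_ne_zero.2 hm.ne'
  have hsum : ∑ k ∈ range (2 * m), e2 (-(n * k) / (2 * m)) * jtheta 1 k m τ (z - a / m) =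
      ∑ k ∈ range (2 * m), e2 (-((n + a) * k) / (2 * m)) * jtheta 1 k m τ z := by
    refine sum_congr rfl fun k _ => ?_
    rw [show z - a / m = z + (-a : ℤ) / m by push_cast; ring, jtheta_one_add_intCast_div hm',
      ← mul_assoc, ← e2_add]
    congr 2
    push_cast
    ring
  have hprefactor : e2 (a * (z / τ) / 2 + a ^ 2 / (4 * m) * (-1 / τ)) =
      e2 (a * z / (2 * τ)) * e2 (-(a ^ 2) / (4 * m * τ)) := by
    rw [← e2_add]
    congr 1
    ring
  rw [Fspecial, show z / τ + a * (-1 / τ) / m + b / m = (z - a / m) / τ + b / m by ring,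
    jtheta_one_add_intCast_div hm', jtheta_one_neg_one_div hm.ne' n hτ, hsum, hprefactor]
  ring

theorem stmt_18 (m : ℕ) (hm : 0 < m) (n : ℤ) (hn : 0 ≤ n ∧ n < 2 * (m : ℤ)) (a b : ℤ)
    (τ : ℂ) (hτ : 0 < τ.im) (z : ℂ) :
    Fspecial m a b n (-1 / τ) (z / τ) =
      (-(Complex.I * τ)) ^ ((1 : ℂ) / 2) / (Real.sqrt (2 * (m : ℝ)) : ℂ) *
        e2 ((n : ℂ) * (b : ℂ) / (2 * (m : ℂ))) * e2 ((a : ℂ) * z / (2 * τ)) *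
        e2 (-((a : ℂ) ^ 2) / (4 * (m : ℂ) * τ)) *
        e2 ((m : ℂ) * (z - (a : ℂ) / (m : ℂ)) ^ 2 / (4 * τ)) *
        gfun (m : ℂ) n (m : ℤ) (-1 / τ) *
        ∑ k ∈ Finset.range (2 * m),
          e2 (-(((n : ℂ) + (a : ℂ)) * (k : ℂ)) / (2 * (m : ℂ))) *
            jtheta 1 (k : ℂ) (m : ℂ) τ z :=
  stmt_18_general m hm n a b τ hτ z
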